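/- arXiv:0802.0572 — 5 statements merged into one kernel-verified Lean document; each statement's English description precedes it below -/
import Mathlib

section
/- Let p be an odd prime. The average, over all p! permutations α of Z_p, of the number Ψ(α) of collinear 3-element subsets of the graph Γ(α) = {(i, α(i)) : i ∈ Z_p}, equals p(p-1)/6. Equivalently, the sum of Ψ(α) over all permutations α of Z_p equals p! · p(p-1)/6. -/
/-!
Double counting: `∑ α, Ψ(α)` counts the pairs `(α, s)` where `s` is a 3-subset on which the graph
of `α` is collinear. For `s = {i, j, k}` the values `α i ≠ α j` can be chosen in `p (p - 1)` ways;
collinearity then forces `α k`, which automatically differs from both, and the remaining `p - 3`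
values are arbitrary. Hence the sum is `C(p, 3) · p (p - 1) · (p - 3)! = p! · p (p - 1) / 6`.
-/

/-- The number of collinear 3-element subsets of the graph of a permutation of `ZMod p`. -/
def psi (p : ℕ) [NeZero p] (α : Equiv.Perm (ZMod p)) : ℕ :=
  (((Finset.univ : Finset (ZMod p)).powersetCard 3).filter (fun s =>
    ∀ x ∈ s, ∀ y ∈ s, ∀ z ∈ s,
      (α y - α x) * (z - x) = (α z - α x) * (y - x))).card

open Finset Function Equiv Nat

section PermCount

variable {α ι : Type*} [Fintype α] [DecidableEq α]

theorem card_perm_fixing (s : Finset α) :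
    #{β : Perm α | ∀ x ∈ s, β x = x} = (Fintype.card α - #s)! := by
  rw [← Fintype.card_subtype, ← Fintype.card_coe s, ← Fintype.card_subtype_compl,
    ← Fintype.card_perm]
  refine Fintype.card_congr ((subtypeEquivRight fun β => ?_).trans
    (Perm.subtypeEquivSubtypePerm (· ∉ s)).symm)
  simp

theorem card_perm_smul_eq [Fintype ι] (x y : ι ↪ α) :
    #{β : Perm α | β • x = y} = (Fintype.card α - Fintype.card ι)! := by
  obtain ⟨σ, rfl⟩ := Perm.exists_smul_eq_embedding x y
  rw [← Fintype.card_range x, ← Set.toFinset_card, ← card_perm_fixing]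
  refine card_nbij' (σ⁻¹ * ·) (σ * ·) ?_ ?_ (fun _ _ => by simp) (fun _ _ => by simp) <;>
    intro β <;> simp +contextual [Embedding.ext_iff, Embedding.smul_apply, Perm.mul_apply]

theorem card_perm_filter_smul [Fintype ι] (x : ι ↪ α) (P : (ι ↪ α) → Prop) [DecidablePred P] :
    #{β : Perm α | P (β • x)} = #{y : ι ↪ α | P y} * (Fintype.card α - Fintype.card ι)! := by
  rw [card_eq_sum_card_fiberwise (f := (· • x)) (t := {y | P y}) (fun β hβ => by simpa using hβ),
    ← smul_eq_mul, ← sum_const]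
  refine sum_congr rfl fun y hy => ?_
  rw [← card_perm_smul_eq x y, filter_filter]
  congr 1
  ext β
  simp only [mem_filter, mem_univ, true_and] at hy ⊢
  exact ⟨And.right, fun h => ⟨h ▸ hy, h⟩⟩

end PermCount

section Collinear

variable {R : Type*} [CommRing R] [DecidableEq R] {i j k : R}

theorem collinear_triple_iff (f : R → R) :
    (∀ x ∈ ({i, j, k} : Finset R), ∀ y ∈ ({i, j, k} : Finset R), ∀ z ∈ ({i, j, k} : Finset R),
        (f y - f x) * (z - x) = (f z - f x) * (y - x))
      ↔ (f j - f i) * (k - i) = (f k - f i) * (j - i) := by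
  refine ⟨fun h => h i (by simp) j (by simp) k (by simp), fun h x hx y hy z hz => ?_⟩
  simp only [mem_insert, mem_singleton] at hx hy hz
  rcases hx with rfl | rfl | rfl <;> rcases hy with rfl | rfl | rfl <;>
    rcases hz with rfl | rfl | rfl <;>
    first
      | ring1
      | linear_combination h
      | linear_combination -h

end Collinear

section Field

variable {F : Type*} [Field F] {i j k a b c : F}

theorem sub_mul_eq_sub_mul_iff_eq_add (hij : i ≠ j) :
    (b - a) * (k - i) = (c - a) * (j - i) ↔ c = a + (b - a) * (k - i) / (j - i) := by
  rw [← sub_eq_iff_eq_add', eq_div_iff (sub_ne_zero.2 hij.symm), eq_comm]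

theorem add_sub_mul_div_notMem_range (x : Fin 2 ↪ F) (hij : i ≠ j) (hik : i ≠ k) (hjk : j ≠ k) :
    x 0 + (x 1 - x 0) * (k - i) / (j - i) ∉ Set.range x := by
  have hx : x 1 - x 0 ≠ 0 := sub_ne_zero.2 (x.injective.ne (by decide))
  have hji : j - i ≠ 0 := sub_ne_zero.2 hij.symm
  simp only [Set.mem_range, Fin.exists_fin_two, not_or]
  constructor
  · simp [hx, hji, sub_ne_zero.2 hik.symm]
  · rw [eq_comm, ← eq_sub_iff_add_eq', div_eq_iff hji, mul_right_inj' hx, sub_left_inj]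
    exact hjk.symm

def collinearEmbeddingEquiv (hij : i ≠ j) (hik : i ≠ k) (hjk : j ≠ k) :
    {y : Fin 3 ↪ F // (y 1 - y 0) * (k - i) = (y 2 - y 0) * (j - i)} ≃ (Fin 2 ↪ F) where
  toFun y := Fin.Embedding.init y
  invFun x := ⟨Fin.Embedding.snoc x (add_sub_mul_div_notMem_range x hij hik hjk),
    by simpa [Fin.snoc] using (sub_mul_eq_sub_mul_iff_eq_add hij).2 rfl⟩
  left_inv := by
    rintro ⟨y, hy⟩
    ext m
    induction m using Fin.lastCases with
    | last => exact ((sub_mul_eq_sub_mul_iff_eq_add hij).1 hy).symm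
    | cast m => exact Fin.snoc_castSucc (α := fun _ => F) _ _ _
  right_inv x := Fin.Embedding.init_snoc x (add_sub_mul_div_notMem_range x hij hik hjk)

variable [Fintype F] [DecidableEq F]

theorem card_collinear_embedding (hij : i ≠ j) (hik : i ≠ k) (hjk : j ≠ k) :
    #{y : Fin 3 ↪ F | (y 1 - y 0) * (k - i) = (y 2 - y 0) * (j - i)}
      = Fintype.card F * (Fintype.card F - 1) := by
  rw [← Fintype.card_subtype, Fintype.card_congr (collinearEmbeddingEquiv hij hik hjk),
    Fintype.card_embedding_eq, Fintype.card_fin, Nat.descFactorial_succ, Nat.descFactorial_one,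
    mul_comm]

theorem card_perm_collinear {s : Finset F} (hs : #s = 3) :
    #{β : Perm F | ∀ x ∈ s, ∀ y ∈ s, ∀ z ∈ s, (β y - β x) * (z - x) = (β z - β x) * (y - x)}
      = Fintype.card F * (Fintype.card F - 1) * (Fintype.card F - 3)! := by
  obtain ⟨i, j, k, hij, hik, hjk, rfl⟩ := card_eq_three.1 hs
  let x : Fin 3 ↪ F := ⟨![i, j, k], by
    simp only [Matrix.vecCons, Fin.cons_injective_iff]
    simp [hij, hik, hjk, Injective, eq_iff_true_of_subsingleton]⟩
  have hx := card_perm_filter_smul x fun y => (y 1 - y 0) * (k - i) = (y 2 - y 0) * (j - i)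
  rw [card_collinear_embedding hij hik hjk, Fintype.card_fin] at hx
  rw [← hx]
  simp_rw [collinear_triple_iff]
  rfl

end Field

theorem stmt_1_general (p : ℕ) [NeZero p] (hodd : Odd p) [Fact p.Prime] :
    (∑ α : Equiv.Perm (ZMod p), (psi p α : ℚ)) / (p.factorial : ℚ)
      = (p * (p - 1) : ℚ) / 6 := by
  have hp3 : 3 ≤ p := by
    have := (Fact.out : p.Prime).two_le
    obtain ⟨m, rfl⟩ := hodd
    omega
  have hsum : ∑ α, psi p α = p.choose 3 * (p * (p - 1) * (p - 3)!) :=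
    calc ∑ α, psi p α
        = ∑ s ∈ (univ : Finset (ZMod p)).powersetCard 3, #{α : Perm (ZMod p) |
            ∀ x ∈ s, ∀ y ∈ s, ∀ z ∈ s, (α y - α x) * (z - x) = (α z - α x) * (y - x)} :=
          sum_card_bipartiteAbove_eq_sum_card_bipartiteBelow _
      _ = p.choose 3 * (p * (p - 1) * (p - 3)!) := by
          rw [sum_congr rfl fun s hs => card_perm_collinear (mem_powersetCard.1 hs).2, sum_const,
            card_powersetCard, Finset.card_univ, ZMod.card, smul_eq_mul]
  have hfact : p.choose 3 * 3 ! * (p - 3)! = p ! := Nat.choose_mul_factorial_mul_factorial hp3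
  have hchoose : (p.choose 3 : ℚ) ≠ 0 := by exact_mod_cast (Nat.choose_pos hp3).ne'
  rw [← Nat.cast_sum, hsum, ← hfact]
  push_cast [Nat.cast_sub (by omega : 1 ≤ p), Nat.factorial]
  field_simp

theorem stmt_1 (p : ℕ) [NeZero p] (hp : p.Prime) (hodd : Odd p) [Fact p.Prime] :
    (∑ α : Equiv.Perm (ZMod p), (psi p α : ℚ)) / (p.factorial : ℚ)
      = (p * (p - 1) : ℚ) / 6 :=
  stmt_1_general p hodd
end

section
/- Let (m_1, m_2, ..., m_n) be nonnegative integers and B an integer with B ≥ 1 such that Σ_{i=1}^{n} i·m_i = n and Σ_{i=2}^{n} C(i,2)·m_i = (n-1)/2 + B (where n is odd). Then Σ_{i=3}^{n} C(i,3)·m_i ≥ ⌈B/2⌉. -/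
/-!
Writing `n = 2k + 1`, twice the second equation minus the first gives
`∑_{i ≥ 3} (2·C(i,2) − i)·m_i = 2B − 1 + m_1 ≥ 2B − 1`. Termwise `2·C(i,2) − i ≤ 3·C(i,3)`, so the
sum `T` in the conclusion satisfies `3T ≥ 2B − 1`, and for an integer `T ≥ 0` this forces `2T ≥ B`.
-/

open Finset

/-- `2·C(i,2) − i = i(i − 2)` while `3·C(i,3) = i(i − 1)(i − 2)/2`. -/
theorem Nat.two_mul_choose_two_le_add_three_mul_choose_three (i : ℕ) :
    2 * i.choose 2 ≤ i + 3 * i.choose 3 := by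
  obtain hi | hi := lt_or_ge i 4
  · interval_cases i <;> decide
  · have hrec : i.choose 3 * 3 = i.choose 2 * (i - 2) := Nat.choose_succ_right_eq i 2
    have : 2 ≤ i - 2 := by omega
    nlinarith

theorem Finset.sum_Icc_choose_mul_of_le {R : Type*} [Semiring R] {a k : ℕ} (hak : a ≤ k)
    (n : ℕ) (f : ℕ → R) :
    ∑ i ∈ Icc a n, (i.choose k : R) * f i = ∑ i ∈ Icc k n, (i.choose k : R) * f i := by
  refine (sum_subset (Icc_subset_Icc_left hak) fun i hi hik => ?_).symm
  have : i < k := by simp only [mem_Icc] at hi hik; omega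
  simp [Nat.choose_eq_zero_of_lt this]

theorem Finset.two_mul_sum_choose_two_le (s : Finset ℕ) (m : ℕ → ℕ) :
    2 * ∑ i ∈ s, i.choose 2 * m i ≤ ∑ i ∈ s, i * m i + 3 * ∑ i ∈ s, i.choose 3 * m i := by
  simp only [mul_sum, ← sum_add_distrib, ← mul_assoc, ← add_mul]
  exact sum_le_sum fun i _ =>
    Nat.mul_le_mul_right _ (Nat.two_mul_choose_two_le_add_three_mul_choose_three i)

theorem stmt_8_general (n : ℕ) (hn : Odd n) (m : ℕ → ℕ) (B : ℤ)
    (h1 : ∑ i ∈ Finset.Icc 1 n, i * m i = n)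
    (h2 : (∑ i ∈ Finset.Icc 2 n, (i.choose 2 : ℤ) * m i) = ((n : ℤ) - 1) / 2 + B) :
    (∑ i ∈ Finset.Icc 3 n, (i.choose 3 : ℤ) * m i) ≥ ⌈(B : ℚ) / 2⌉ := by
  obtain ⟨k, rfl⟩ := hn
  set T := ∑ i ∈ Icc 3 (2 * k + 1), (i.choose 3 : ℤ) * m i
  have hT : 0 ≤ T := sum_nonneg fun i _ => by positivity
  have hcount : 2 * ∑ i ∈ Icc 1 (2 * k + 1), (i.choose 2 : ℤ) * m i
      ≤ ∑ i ∈ Icc 1 (2 * k + 1), (i : ℤ) * m i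
        + 3 * ∑ i ∈ Icc 1 (2 * k + 1), (i.choose 3 : ℤ) * m i := by
    exact_mod_cast two_mul_sum_choose_two_le (Icc 1 (2 * k + 1)) m
  rw [sum_Icc_choose_mul_of_le (by norm_num : 1 ≤ 2), h2,
    sum_Icc_choose_mul_of_le (by norm_num : 1 ≤ 3)] at hcount
  have h1' : ∑ i ∈ Icc 1 (2 * k + 1), (i : ℤ) * m i = 2 * k + 1 := by exact_mod_cast h1
  have hhalf : ((2 * k + 1 : ℕ) - 1 : ℤ) / 2 = k := by omega
  rw [hhalf, h1'] at hcount
  rw [ge_iff_le, Int.ceil_le, div_le_iff₀ two_pos]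
  exact_mod_cast (by omega : B ≤ T * 2)

theorem stmt_8 (n : ℕ) (hn : Odd n) (m : ℕ → ℕ) (B : ℤ) (hB : 1 ≤ B)
    (h1 : ∑ i ∈ Finset.Icc 1 n, i * m i = n)
    (h2 : (∑ i ∈ Finset.Icc 2 n, (i.choose 2 : ℤ) * m i) = ((n : ℤ) - 1) / 2 + B) :
    (∑ i ∈ Finset.Icc 3 n, (i.choose 3 : ℤ) * m i) ≥ ⌈(B : ℚ) / 2⌉ :=
  stmt_8_general n hn m B h1 h2
end

section
/- Let p be an odd prime and α a permutation of Z_p. Then the number Ψ(α) of 3-element subsets {i,j,k} of Z_p such that (i,α(i)), (j,α(j)), (k,α(k)) are collinear in Z_p × Z_p satisfies Ψ(α) ≥ ⌈(p-1)/4⌉. -/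
open Finset

namespace CSaux

lemma nat_le_choose_two_add_one (n : ℕ) : n ≤ n.choose 2 + 1 := by
  induction n with
  | zero => simp
  | succ n ih =>
    rw [Nat.choose_succ_succ]
    have h : n.choose 1 = n := Nat.choose_one_right n
    omega

lemma choose_two_le (n : ℕ) :
    n.choose 2 ≤ 2 * n.choose 3 + (if 2 ≤ n then 1 else 0) := by
  match n with
  | 0 => simp
  | 1 => simp
  | (n+2) =>
    rw [if_pos (by omega)]
    have h1 : (n+2).choose 2 = (n+1).choose 1 + (n+1).choose 2 := Nat.choose_succ_succ _ _
    have h2 : (n+2).choose 3 = (n+1).choose 2 + (n+1).choose 3 := Nat.choose_succ_succ _ _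
    have h3 := nat_le_choose_two_add_one (n+1)
    have h4 : (n+1).choose 1 = n+1 := Nat.choose_one_right _
    omega

variable {p : ℕ} [NeZero p] [Fact p.Prime]

/-- The set of `i` with `(i, α i)` on the line `y = m x + b`. -/
def Lset (α : Equiv.Perm (ZMod p)) (m b : ZMod p) : Finset (ZMod p) :=
  univ.filter (fun i => α i - m * i = b)

lemma mem_Lset {α : Equiv.Perm (ZMod p)} {m b i : ZMod p} :
    i ∈ Lset α m b ↔ α i - m * i = b := by
  simp [Lset]

lemma sum_card_Lset (α : Equiv.Perm (ZMod p)) (m : ZMod p) :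
    ∑ b : ZMod p, (Lset α m b).card = p := by
  have h := Finset.card_eq_sum_card_fiberwise
    (f := fun i : ZMod p => α i - m * i) (s := univ) (t := univ) (fun x _ => mem_univ _)
  rw [card_univ, ZMod.card] at h
  exact h.symm

lemma slope_bound (α : Equiv.Perm (ZMod p)) (m : ZMod p) (t : ℕ) (hpt : p = 2 * t + 1) :
    ∑ b : ZMod p, ((Lset α m b).card).choose 2
      ≤ 2 * (∑ b : ZMod p, ((Lset α m b).card).choose 3) + t := by
  have hk : (univ.filter (fun b : ZMod p => 2 ≤ (Lset α m b).card)).card ≤ t := by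
    have h2 : (univ.filter (fun b : ZMod p => 2 ≤ (Lset α m b).card)).card * 2
        ≤ ∑ b ∈ univ.filter (fun b : ZMod p => 2 ≤ (Lset α m b).card), (Lset α m b).card :=
      Finset.card_nsmul_le_sum _ _ 2 (fun b hb => (mem_filter.mp hb).2)
    have h3 : ∑ b ∈ univ.filter (fun b : ZMod p => 2 ≤ (Lset α m b).card), (Lset α m b).card
        ≤ ∑ b : ZMod p, (Lset α m b).card :=
      Finset.sum_le_sum_of_subset (filter_subset _ _)
    have h4 := sum_card_Lset α m
    omega
  calc ∑ b : ZMod p, ((Lset α m b).card).choose 2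
      ≤ ∑ b : ZMod p, (2 * ((Lset α m b).card).choose 3
          + (if 2 ≤ (Lset α m b).card then 1 else 0)) :=
        Finset.sum_le_sum (fun b _ => choose_two_le _)
    _ = 2 * (∑ b : ZMod p, ((Lset α m b).card).choose 3)
          + (univ.filter (fun b : ZMod p => 2 ≤ (Lset α m b).card)).card := by
        rw [Finset.sum_add_distrib, Finset.mul_sum]
        congr 1
        simp [Finset.sum_ite]
    _ ≤ 2 * (∑ b : ZMod p, ((Lset α m b).card).choose 3) + t := by omega

lemma triples_le_psi (α : Equiv.Perm (ZMod p)) :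
    ∑ mb ∈ (univ ×ˢ univ : Finset (ZMod p × ZMod p)),
      ((Lset α mb.1 mb.2).card).choose 3 ≤ psi p α := by
  have hdisj : ∀ x ∈ (univ ×ˢ univ : Finset (ZMod p × ZMod p)),
      ∀ y ∈ (univ ×ˢ univ : Finset (ZMod p × ZMod p)), x ≠ y →
      Disjoint ((Lset α x.1 x.2).powersetCard 3) ((Lset α y.1 y.2).powersetCard 3) := by
    rintro ⟨m, b⟩ - ⟨m', b'⟩ - hne
    rw [Finset.disjoint_left]
    intro s hs hs'
    rw [Finset.mem_powersetCard] at hs hs'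
    obtain ⟨hsub, hcard⟩ := hs
    obtain ⟨hsub', -⟩ := hs'
    obtain ⟨x, hx, y, hy, hxy⟩ := Finset.one_lt_card.mp (by omega : 1 < s.card)
    have e1 : α x - m * x = b := mem_Lset.mp (hsub hx)
    have e2 : α y - m * y = b := mem_Lset.mp (hsub hy)
    have e1' : α x - m' * x = b' := mem_Lset.mp (hsub' hx)
    have e2' : α y - m' * y = b' := mem_Lset.mp (hsub' hy)
    have hm : m = m' := by
      have h : (m - m') * (x - y) = 0 := by linear_combination e1' - e2' - e1 + e2
      rcases mul_eq_zero.mp h with h | h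
      · exact sub_eq_zero.mp h
      · exact absurd (sub_eq_zero.mp h) hxy
    have hb : b = b' := by rw [← e1, ← e1', hm]
    exact hne (by rw [Prod.mk.injEq]; exact ⟨hm, hb⟩)
  calc ∑ mb ∈ (univ ×ˢ univ : Finset (ZMod p × ZMod p)), ((Lset α mb.1 mb.2).card).choose 3
      = ∑ mb ∈ (univ ×ˢ univ : Finset (ZMod p × ZMod p)),
          ((Lset α mb.1 mb.2).powersetCard 3).card := by
        refine Finset.sum_congr rfl (fun mb _ => ?_)
        rw [Finset.card_powersetCard]
    _ = ((univ ×ˢ univ : Finset (ZMod p × ZMod p)).biUnion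
          (fun mb => (Lset α mb.1 mb.2).powersetCard 3)).card :=
        (Finset.card_biUnion hdisj).symm
    _ ≤ psi p α := by
        apply Finset.card_le_card
        intro s hs
        rw [Finset.mem_biUnion] at hs
        obtain ⟨⟨m, b⟩, -, hs⟩ := hs
        rw [Finset.mem_powersetCard] at hs
        obtain ⟨hsub, hcard⟩ := hs
        rw [Finset.mem_filter, Finset.mem_powersetCard]
        refine ⟨⟨fun x _ => mem_univ x, hcard⟩, fun x hx y hy z hz => ?_⟩
        have ex : α x - m * x = b := mem_Lset.mp (hsub hx)
        have ey : α y - m * y = b := mem_Lset.mp (hsub hy)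
        have ez : α z - m * z = b := mem_Lset.mp (hsub hz)
        linear_combination (z - x) * (ey - ex) - (y - x) * (ez - ex)

lemma pairs_ge (α : Equiv.Perm (ZMod p)) :
    p.choose 2 ≤ ∑ mb ∈ ((univ \ {0}) ×ˢ univ : Finset (ZMod p × ZMod p)),
      ((Lset α mb.1 mb.2).card).choose 2 := by
  have hsub : ((univ : Finset (ZMod p)).powersetCard 2) ⊆
      (((univ \ {0}) ×ˢ univ : Finset (ZMod p × ZMod p)).biUnion
        (fun mb => (Lset α mb.1 mb.2).powersetCard 2)) := by
    intro s hs
    rw [Finset.mem_powersetCard] at hs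
    obtain ⟨x, y, hxy, rfl⟩ := Finset.card_eq_two.mp hs.2
    have hxyne : x - y ≠ 0 := sub_ne_zero.mpr hxy
    set m : ZMod p := (α x - α y) * (x - y)⁻¹ with hmdef
    have hmy : m * (x - y) = α x - α y := by
      rw [hmdef, mul_assoc, inv_mul_cancel₀ hxyne, mul_one]
    have hmne : m ≠ 0 := by
      intro h
      rw [h, zero_mul] at hmy
      exact hxy (α.injective (sub_eq_zero.mp hmy.symm))
    rw [Finset.mem_biUnion]
    refine ⟨(m, α x - m * x), ?_, ?_⟩
    · rw [Finset.mem_product]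
      exact ⟨Finset.mem_sdiff.mpr ⟨mem_univ _, by simpa using hmne⟩, mem_univ _⟩
    · rw [Finset.mem_powersetCard]
      refine ⟨?_, Finset.card_pair hxy⟩
      intro z hz
      rcases Finset.mem_insert.mp hz with rfl | hz
      · exact mem_Lset.mpr rfl
      · rw [Finset.mem_singleton] at hz
        subst hz
        exact mem_Lset.mpr (by linear_combination hmy)
  calc p.choose 2 = ((univ : Finset (ZMod p)).powersetCard 2).card := by
        rw [Finset.card_powersetCard, card_univ, ZMod.card]
    _ ≤ ((((univ \ {0}) ×ˢ univ : Finset (ZMod p × ZMod p)).biUnion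
          (fun mb => (Lset α mb.1 mb.2).powersetCard 2))).card :=
        Finset.card_le_card hsub
    _ ≤ ∑ mb ∈ ((univ \ {0}) ×ˢ univ : Finset (ZMod p × ZMod p)),
          ((Lset α mb.1 mb.2).powersetCard 2).card := Finset.card_biUnion_le
    _ = ∑ mb ∈ ((univ \ {0}) ×ˢ univ : Finset (ZMod p × ZMod p)),
          ((Lset α mb.1 mb.2).card).choose 2 := by
        refine Finset.sum_congr rfl (fun mb _ => ?_)
        rw [Finset.card_powersetCard]

lemma key_bound (hodd : Odd p) (α : Equiv.Perm (ZMod p)) :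
    p - 1 ≤ 4 * psi p α := by
  obtain ⟨t, hpt⟩ := hodd
  have hchoose : p.choose 2 = (2 * t + 1) * t := by
    rw [hpt, Nat.choose_two_right]
    have : (2 * t + 1) * (2 * t + 1 - 1) = ((2 * t + 1) * t) * 2 := by
      have h : 2 * t + 1 - 1 = 2 * t := by omega
      rw [h]; ring
    rw [this, Nat.mul_div_cancel _ (by norm_num)]
  have hcard0 : ((univ \ {0} : Finset (ZMod p))).card = 2 * t := by
    rw [Finset.card_sdiff_of_subset (by simp), card_univ, ZMod.card, Finset.card_singleton, hpt]
    omega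
  have step1 := pairs_ge α
  have step2 : ∑ mb ∈ ((univ \ {0}) ×ˢ univ : Finset (ZMod p × ZMod p)),
      ((Lset α mb.1 mb.2).card).choose 2
      ≤ 2 * (∑ mb ∈ ((univ \ {0}) ×ˢ univ : Finset (ZMod p × ZMod p)),
          ((Lset α mb.1 mb.2).card).choose 3) + 2 * t * t := by
    rw [Finset.sum_product, Finset.sum_product, Finset.mul_sum]
    calc ∑ m ∈ univ \ {0}, ∑ b : ZMod p, ((Lset α m b).card).choose 2
        ≤ ∑ m ∈ univ \ {0}, (2 * (∑ b : ZMod p, ((Lset α m b).card).choose 3) + t) :=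
          Finset.sum_le_sum (fun m _ => slope_bound α m t hpt)
      _ = (∑ m ∈ univ \ {0}, 2 * (∑ b : ZMod p, ((Lset α m b).card).choose 3))
            + 2 * t * t := by
          rw [Finset.sum_add_distrib, Finset.sum_const, hcard0, smul_eq_mul]
  have step3 : ∑ mb ∈ ((univ \ {0}) ×ˢ univ : Finset (ZMod p × ZMod p)),
      ((Lset α mb.1 mb.2).card).choose 3
      ≤ ∑ mb ∈ (univ ×ˢ univ : Finset (ZMod p × ZMod p)),
          ((Lset α mb.1 mb.2).card).choose 3 :=
    Finset.sum_le_sum_of_subset (Finset.product_subset_product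
      (Finset.sdiff_subset) (subset_refl _))
  have step4 := triples_le_psi α
  have hfin : (2 * t + 1) * t ≤ 2 * psi p α + 2 * t * t := by
    calc (2 * t + 1) * t = p.choose 2 := hchoose.symm
      _ ≤ _ := step1
      _ ≤ 2 * (∑ mb ∈ ((univ \ {0}) ×ˢ univ : Finset (ZMod p × ZMod p)),
            ((Lset α mb.1 mb.2).card).choose 3) + 2 * t * t := step2
      _ ≤ 2 * psi p α + 2 * t * t := by
          have := le_trans step3 step4
          omega
  have hexp : (2 * t + 1) * t = 2 * t * t + t := by ring
  omega

end CSaux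

theorem stmt_10 (p : ℕ) [NeZero p] (hp : p.Prime) (hodd : Odd p) [Fact p.Prime]
    (α : Equiv.Perm (ZMod p)) :
    (psi p α : ℤ) ≥ ⌈((p : ℚ) - 1) / 4⌉ := by
  have key := CSaux.key_bound hodd α
  rw [ge_iff_le, Int.ceil_le]
  push_cast
  rw [div_le_iff₀ (by norm_num : (0 : ℚ) < 4)]
  have hp1 : 1 ≤ p := hp.one_lt.le
  have : (p : ℚ) - 1 ≤ 4 * (psi p α : ℚ) := by
    have h := key
    have : ((p - 1 : ℕ) : ℚ) ≤ ((4 * psi p α : ℕ) : ℚ) := by exact_mod_cast h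
    rw [Nat.cast_sub hp1] at this
    push_cast at this
    linarith
  linarith
end

section
/- Let p be an odd prime and let Γ be a subset of Z_p × Z_p with |Γ| ≥ p + 3. Then Γ contains three distinct collinear points; i.e., Ψ(Γ) > 0. -/
/-!
Fix a point `a ∈ Γ`. The other points of `Γ` determine a direction from `a`, an element of the
projective line over `ZMod p`, which has only `p + 1` elements; since there are at least `p + 2`
other points, two of them share a direction, and they are collinear with `a`.
-/

namespace AffinePlane

variable {K : Type*} [Field K] [DecidableEq K]

def slope (a x : K × K) : Option K :=
  if x.1 = a.1 then none else some ((x.2 - a.2) / (x.1 - a.1))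

theorem collinear_of_slope_eq {a b c : K × K} (h : slope a b = slope a c) :
    (b.2 - a.2) * (c.1 - a.1) = (c.2 - a.2) * (b.1 - a.1) := by
  unfold slope at h
  by_cases hb : b.1 = a.1 <;> by_cases hc : c.1 = a.1 <;> simp only [hb, hc, if_true, if_false,
    reduceCtorEq, Option.some_inj] at h
  · rw [hb, hc, sub_self, mul_zero, mul_zero]
  · exact (div_eq_div_iff (sub_ne_zero.mpr hb) (sub_ne_zero.mpr hc)).mp h

theorem exists_collinear_of_card_add_three_le [Fintype K] (Γ : Finset (K × K))
    (hΓ : Fintype.card K + 3 ≤ Γ.card) :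
    ∃ a ∈ Γ, ∃ b ∈ Γ, ∃ c ∈ Γ, a ≠ b ∧ a ≠ c ∧ b ≠ c ∧
      (b.2 - a.2) * (c.1 - a.1) = (c.2 - a.2) * (b.1 - a.1) := by
  obtain ⟨a, ha⟩ := Finset.card_pos.mp (by omega : 0 < Γ.card)
  have hcard : (Finset.univ : Finset (Option K)).card < (Γ.erase a).card := by
    rw [Finset.card_univ, Fintype.card_option, Finset.card_erase_of_mem ha]
    omega
  obtain ⟨b, hb, c, hc, hbc, hslope⟩ :=
    Finset.exists_ne_map_eq_of_card_lt_of_maps_to hcard fun x _ => Finset.mem_univ (slope a x)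
  exact ⟨a, ha, b, Finset.mem_of_mem_erase hb, c, Finset.mem_of_mem_erase hc,
    (Finset.ne_of_mem_erase hb).symm, (Finset.ne_of_mem_erase hc).symm, hbc,
    collinear_of_slope_eq hslope⟩

end AffinePlane

theorem stmt_11_general (p : ℕ) [Fact p.Prime]
    (Γ : Finset (ZMod p × ZMod p)) (hΓ : p + 3 ≤ Γ.card) :
    ∃ a ∈ Γ, ∃ b ∈ Γ, ∃ c ∈ Γ, a ≠ b ∧ a ≠ c ∧ b ≠ c ∧
      (b.2 - a.2) * (c.1 - a.1) = (c.2 - a.2) * (b.1 - a.1) :=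
  AffinePlane.exists_collinear_of_card_add_three_le Γ (by rw [ZMod.card]; omega)

theorem stmt_11 (p : ℕ) (hp : p.Prime) (hodd : Odd p) [Fact p.Prime]
    (Γ : Finset (ZMod p × ZMod p)) (hΓ : p + 3 ≤ Γ.card) :
    ∃ a ∈ Γ, ∃ b ∈ Γ, ∃ c ∈ Γ, a ≠ b ∧ a ≠ c ∧ b ≠ c ∧
      (b.2 - a.2) * (c.1 - a.1) = (c.2 - a.2) * (b.1 - a.1) :=
  stmt_11_general p Γ hΓ
end

section
/- Let p be an odd prime and let Γ be a subset of Z_p × Z_p with |Γ| = p + 2. Then the number Ψ(Γ) of collinear 3-element subsets of Γ satisfies Ψ(Γ) ≥ ⌈(p+1)/4⌉. -/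
open Finset

/-- The number of collinear 3-element subsets of a set of points in `ZMod p × ZMod p`. -/
def psiSet (p : ℕ) (Γ : Finset (ZMod p × ZMod p)) : ℕ :=
  ((Γ.powersetCard 3).filter (fun s =>
    ∀ a ∈ s, ∀ b ∈ s, ∀ c ∈ s,
      (b.2 - a.2) * (c.1 - a.1) = (c.2 - a.2) * (b.1 - a.1))).card

namespace Psi12

variable {p : ℕ} [Fact p.Prime]

/-- projection along a direction: fibers are the lines of that direction -/
def pr (p : ℕ) : Option (ZMod p) → ZMod p × ZMod p → ZMod p
  | none => fun q => q.1
  | some m => fun q => q.2 - m * q.1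

@[simp] lemma pr_none (q : ZMod p × ZMod p) : pr p none q = q.1 := rfl
@[simp] lemma pr_some (m : ZMod p) (q : ZMod p × ZMod p) :
    pr p (some m) q = q.2 - m * q.1 := rfl

lemma dir_unique {a b : ZMod p × ZMod p} (hab : a ≠ b) {d d' : Option (ZMod p)}
    (h : pr p d a = pr p d b) (h' : pr p d' a = pr p d' b) : d = d' := by
  match d, d' with
  | none, none => rfl
  | none, some m =>
      simp only [pr_none, pr_some] at h h'
      rw [h] at h'
      exact absurd (Prod.ext h (by linear_combination h')) hab
  | some m, none =>
      simp only [pr_none, pr_some] at h h'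
      rw [h'] at h
      exact absurd (Prod.ext h' (by linear_combination h)) hab
  | some m, some m' =>
      simp only [pr_some] at h h'
      by_cases h1 : a.1 = b.1
      · rw [h1] at h
        exact absurd (Prod.ext h1 (by linear_combination h)) hab
      · have : (m - m') * (a.1 - b.1) = 0 := by linear_combination h' - h
        rcases mul_eq_zero.mp this with h2 | h2
        · exact congrArg some (by linear_combination h2)
        · exact absurd (by linear_combination h2 : a.1 = b.1) h1

lemma dir_exists {a b : ZMod p × ZMod p} (hab : a ≠ b) :
    ∃ d, pr p d a = pr p d b := by
  by_cases h1 : a.1 = b.1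
  · exact ⟨none, h1⟩
  · refine ⟨some ((b.2 - a.2) * (b.1 - a.1)⁻¹), ?_⟩
    simp only [pr_some]
    have h2 : b.1 - a.1 ≠ 0 := sub_ne_zero.mpr (Ne.symm h1)
    field_simp
    ring

/-- constant projection implies collinearity equations -/
lemma collinear_of_const {d : Option (ZMod p)} {s : Finset (ZMod p × ZMod p)}
    (h : ∀ a ∈ s, ∀ b ∈ s, pr p d a = pr p d b) :
    ∀ a ∈ s, ∀ b ∈ s, ∀ c ∈ s,
      (b.2 - a.2) * (c.1 - a.1) = (c.2 - a.2) * (b.1 - a.1) := by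
  intro a ha b hb c hc
  match d with
  | none =>
      have h1 := h a ha b hb
      have h2 := h a ha c hc
      simp only [pr_none] at h1 h2
      rw [← h1, ← h2]
      ring
  | some m =>
      have h1 := h a ha b hb
      have h2 := h a ha c hc
      simp only [pr_some] at h1 h2
      linear_combination (a.1 - c.1) * h1 - (a.1 - b.1) * h2

/-- collinearity implies constant projection along some direction -/
lemma const_of_collinear {s : Finset (ZMod p × ZMod p)} (hs : s.card = 3)
    (hcol : ∀ a ∈ s, ∀ b ∈ s, ∀ c ∈ s,
      (b.2 - a.2) * (c.1 - a.1) = (c.2 - a.2) * (b.1 - a.1)) :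
    ∃ d, ∀ a ∈ s, ∀ b ∈ s, pr p d a = pr p d b := by
  have hs2 : 1 < s.card := by omega
  obtain ⟨a, ha, b, hb, hab⟩ := Finset.one_lt_card.mp hs2
  by_cases h1 : a.1 = b.1
  · refine ⟨none, ?_⟩
    have key : ∀ c ∈ s, c.1 = a.1 := by
      intro c hc
      have hd := hcol a ha b hb c hc
      have h2 : b.2 - a.2 ≠ 0 := by
        intro h3
        exact hab (Prod.ext h1 (by linear_combination -h3))
      have : (b.2 - a.2) * (c.1 - a.1) = 0 := by rw [hd, h1]; ring
      have := (mul_eq_zero.mp this).resolve_left h2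
      linear_combination this
    intro x hx y hy
    simp only [pr_none, key x hx, key y hy]
  · have hba : b.1 - a.1 ≠ 0 := sub_ne_zero.mpr (Ne.symm h1)
    refine ⟨some ((b.2 - a.2) * (b.1 - a.1)⁻¹), ?_⟩
    have key : ∀ c ∈ s, pr p (some ((b.2 - a.2) * (b.1 - a.1)⁻¹)) c
        = pr p (some ((b.2 - a.2) * (b.1 - a.1)⁻¹)) a := by
      intro c hc
      have hd := hcol a ha b hb c hc
      simp only [pr_some]
      field_simp
      ring_nf
      ring_nf at hd
      linear_combination -hd
    intro x hx y hy
    rw [key x hx, key y hy]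


section Counting

variable (Γ : Finset (ZMod p × ZMod p))

/-- the line in direction `d` with parameter `t`, intersected with `Γ` -/
noncomputable def fib (d : Option (ZMod p)) (t : ZMod p) : Finset (ZMod p × ZMod p) :=
  Γ.filter (fun q => pr p d q = t)

lemma fib_subset (d : Option (ZMod p)) (t : ZMod p) : fib Γ d t ⊆ Γ :=
  Finset.filter_subset _ _

/-- the (direction, parameter) of the line spanned by a finset (junk value if not constant) -/
noncomputable def key (s : Finset (ZMod p × ZMod p)) : Option (ZMod p) × ZMod p :=
  if h : ∃ dt : Option (ZMod p) × ZMod p, ∀ a ∈ s, pr p dt.1 a = dt.2 then h.choose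
  else (none, 0)

lemma key_eq {s : Finset (ZMod p × ZMod p)} (hne : ∃ a ∈ s, ∃ b ∈ s, a ≠ b)
    {d : Option (ZMod p)} {t : ZMod p} (h : ∀ a ∈ s, pr p d a = t) :
    key s = (d, t) := by
  obtain ⟨a, ha, b, hb, hab⟩ := hne
  have hex : ∃ dt : Option (ZMod p) × ZMod p, ∀ a ∈ s, pr p dt.1 a = dt.2 := ⟨(d, t), h⟩
  rw [key, dif_pos hex]
  have hspec := hex.choose_spec
  have hd : hex.choose.1 = d :=
    dir_unique hab (by rw [hspec a ha, hspec b hb]) (by rw [h a ha, h b hb])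
  have ht : hex.choose.2 = t := by rw [← hspec a ha, hd, h a ha]
  exact Prod.ext hd ht

lemma filter_key_eq (d : Option (ZMod p)) (t : ZMod p) :
    (Γ.powersetCard 2).filter (fun s => key s = (d, t)) = (fib Γ d t).powersetCard 2 := by
  ext s
  simp only [Finset.mem_filter, Finset.mem_powersetCard]
  constructor
  · rintro ⟨⟨hsub, hcard⟩, hkey⟩
    refine ⟨?_, hcard⟩
    obtain ⟨a, b, hab, rfl⟩ := Finset.card_eq_two.mp hcard
    obtain ⟨d₀, hd₀⟩ := dir_exists hab
    have hconst : ∀ c ∈ ({a, b} : Finset (ZMod p × ZMod p)), pr p d₀ c = pr p d₀ a := by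
      intro c hc
      rcases Finset.mem_insert.mp hc with rfl | hc
      · rfl
      · rw [Finset.mem_singleton.mp hc, ← hd₀]
    have hk := key_eq ⟨a, Finset.mem_insert_self a _, b,
      Finset.mem_insert_of_mem (Finset.mem_singleton_self b), hab⟩ hconst
    rw [hkey] at hk
    obtain ⟨h1, h2⟩ := Prod.mk.injEq _ _ _ _ ▸ hk
    intro c hc
    rw [fib, Finset.mem_filter]
    exact ⟨hsub hc, by rw [h1, hconst c hc, h2]⟩
  · rintro ⟨hsub, hcard⟩
    have hmem : ∀ a ∈ s, a ∈ Γ ∧ pr p d a = t := by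
      intro a ha
      have := hsub ha
      rw [fib, Finset.mem_filter] at this
      exact this
    refine ⟨⟨fun a ha => (hmem a ha).1, hcard⟩, ?_⟩
    obtain ⟨a, b, hab, rfl⟩ := Finset.card_eq_two.mp hcard
    exact key_eq ⟨a, Finset.mem_insert_self a _, b,
      Finset.mem_insert_of_mem (Finset.mem_singleton_self b), hab⟩
      (fun a ha => (hmem a ha).2)

lemma pairs_count :
    (Γ.powersetCard 2).card
      = ∑ dt : Option (ZMod p) × ZMod p, ((fib Γ dt.1 dt.2).powersetCard 2).card := by
  rw [Finset.card_eq_sum_card_fiberwise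
    (f := key) (t := (Finset.univ : Finset (Option (ZMod p) × ZMod p)))
    (fun x _ => Finset.mem_univ _)]
  refine Finset.sum_congr rfl (fun dt _ => ?_)
  obtain ⟨d, t⟩ := dt
  rw [filter_key_eq Γ d t]

lemma fib_sizes (d : Option (ZMod p)) :
    ∑ t : ZMod p, (fib Γ d t).card = Γ.card := by
  exact (Finset.card_eq_sum_card_fiberwise
    (f := pr p d) (t := (Finset.univ : Finset (ZMod p)))
    (fun x _ => Finset.mem_univ _)).symm

lemma triples_le :
    ∑ dt : Option (ZMod p) × ZMod p, ((fib Γ dt.1 dt.2).powersetCard 3).card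
      ≤ psiSet p Γ := by
  classical
  unfold psiSet
  have hdisj : ∀ x ∈ (Finset.univ : Finset (Option (ZMod p) × ZMod p)), ∀ y ∈ Finset.univ,
      x ≠ y → Disjoint ((fib Γ x.1 x.2).powersetCard 3) ((fib Γ y.1 y.2).powersetCard 3) := by
    intro x _ y _ hxy
    rw [Finset.disjoint_left]
    intro s hs hs'
    rw [Finset.mem_powersetCard] at hs hs'
    obtain ⟨hsub, hcard⟩ := hs
    obtain ⟨hsub', _⟩ := hs'
    have hs2 : 1 < s.card := by omega
    obtain ⟨a, ha, b, hb, hab⟩ := Finset.one_lt_card.mp hs2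
    have hax := (Finset.mem_filter.mp (hsub ha)).2
    have hbx := (Finset.mem_filter.mp (hsub hb)).2
    have hay := (Finset.mem_filter.mp (hsub' ha)).2
    have hby := (Finset.mem_filter.mp (hsub' hb)).2
    have h1 : x.1 = y.1 := dir_unique hab (by rw [hax, hbx]) (by rw [hay, hby])
    have h2 : x.2 = y.2 := by rw [← hax, h1, hay]
    exact hxy (Prod.ext h1 h2)
  rw [← Finset.card_biUnion hdisj]
  apply Finset.card_le_card
  intro s hs
  rw [Finset.mem_biUnion] at hs
  obtain ⟨dt, _, hs⟩ := hs
  rw [Finset.mem_powersetCard] at hs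
  obtain ⟨hsub, hcard⟩ := hs
  simp only [Finset.mem_filter, Finset.mem_powersetCard]
  refine ⟨⟨hsub.trans (fib_subset Γ dt.1 dt.2), hcard⟩, ?_⟩
  exact collinear_of_const (fun a ha b hb => by
    rw [(Finset.mem_filter.mp (hsub ha)).2, (Finset.mem_filter.mp (hsub hb)).2])

end Counting


/-- the per-line inequality `2·C(n,2) ≤ n + 4·C(n,3)` -/
lemma choose_ineq (n : ℕ) : 2 * n.choose 2 ≤ n + 4 * n.choose 3 := by
  rcases le_or_gt n 3 with h | h
  · interval_cases n <;> decide
  · have h3 : n.choose 3 * 3 = n.choose 2 * (n - 2) := Nat.choose_succ_right_eq n 2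
    have h4 : n.choose 2 * 2 ≤ n.choose 2 * (n - 2) :=
      Nat.mul_le_mul_left _ (by omega)
    omega

end Psi12

theorem stmt_12 (p : ℕ) (hp : p.Prime) (hodd : Odd p) [Fact p.Prime]
    (Γ : Finset (ZMod p × ZMod p)) (hΓ : Γ.card = p + 2) :
    (psiSet p Γ : ℤ) ≥ ⌈((p : ℚ) + 1) / 4⌉ := by
  classical
  -- abbreviations
  set n : Option (ZMod p) × ZMod p → ℕ := fun dt => ((Psi12.fib Γ dt.1 dt.2)).card with hn
  -- pairs count
  have hpairs : (p + 2).choose 2 = ∑ dt : Option (ZMod p) × ZMod p, (n dt).choose 2 := by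
    have := Psi12.pairs_count Γ
    rw [Finset.card_powersetCard, hΓ] at this
    rw [this]
    exact Finset.sum_congr rfl (fun dt _ => Finset.card_powersetCard _ _)
  -- triples count
  have htriples : ∑ dt : Option (ZMod p) × ZMod p, (n dt).choose 3 ≤ psiSet p Γ := by
    have := Psi12.triples_le Γ
    calc ∑ dt : Option (ZMod p) × ZMod p, (n dt).choose 3
        = ∑ dt : Option (ZMod p) × ZMod p, ((Psi12.fib Γ dt.1 dt.2).powersetCard 3).card :=
          Finset.sum_congr rfl (fun dt _ => (Finset.card_powersetCard _ _).symm)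
      _ ≤ psiSet p Γ := this
  -- per-direction inequality
  have hdir : ∀ d : Option (ZMod p),
      2 * ∑ t : ZMod p, (n (d, t)).choose 2
        ≤ (p + 1) + 4 * ∑ t : ZMod p, (n (d, t)).choose 3 := by
    intro d
    have hsum : ∑ t : ZMod p, n (d, t) = p + 2 := by
      rw [hn]; simpa [hΓ] using Psi12.fib_sizes Γ d
    have h1 : ∑ t : ZMod p, 2 * (n (d, t)).choose 2
        ≤ ∑ t : ZMod p, (n (d, t) + 4 * (n (d, t)).choose 3) :=
      Finset.sum_le_sum (fun t _ => Psi12.choose_ineq _)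
    rw [Finset.sum_add_distrib, hsum, ← Finset.mul_sum, ← Finset.mul_sum] at h1
    obtain ⟨k, hk⟩ := hodd
    omega
  -- sum over directions
  have hcardD : Fintype.card (Option (ZMod p)) = p + 1 := by
    rw [Fintype.card_option, ZMod.card]
  have hmain : 2 * (p + 2).choose 2 ≤ (p + 1) * (p + 1) + 4 * ∑ dt : Option (ZMod p) × ZMod p, (n dt).choose 3 := by
    rw [hpairs]
    rw [Fintype.sum_prod_type, Fintype.sum_prod_type, Finset.mul_sum, Finset.mul_sum]
    calc ∑ d : Option (ZMod p), 2 * ∑ t : ZMod p, (n (d, t)).choose 2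
        ≤ ∑ d : Option (ZMod p), ((p + 1) + 4 * ∑ t : ZMod p, (n (d, t)).choose 3) :=
          Finset.sum_le_sum (fun d _ => hdir d)
      _ = (p + 1) * (p + 1) + ∑ d : Option (ZMod p), 4 * ∑ t : ZMod p, (n (d, t)).choose 3 := by
          rw [Finset.sum_add_distrib, Finset.sum_const, Finset.card_univ, hcardD, smul_eq_mul]
  -- 2 * C(p+2, 2) = (p+2)(p+1)
  have hch2 : 2 * (p + 2).choose 2 = (p + 2) * (p + 1) := by
    have he : (2:ℕ) ∣ (p + 2) * (p + 1) := by
      rcases Nat.even_or_odd p with ⟨k, hk⟩ | ⟨k, hk⟩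
      · exact Dvd.dvd.mul_right (by omega) _
      · exact Dvd.dvd.mul_left (by omega) _
    rw [Nat.choose_two_right, show p + 2 - 1 = p + 1 by omega]
    exact Nat.mul_div_cancel' he
  -- conclude p + 1 ≤ 4 * psiSet
  have hfin : p + 1 ≤ 4 * psiSet p Γ := by
    rw [hpairs] at hch2 hmain
    have hexp : (p + 2) * (p + 1) = (p + 1) * (p + 1) + (p + 1) := by ring
    omega
  -- finish
  rw [ge_iff_le, Int.ceil_le]
  rw [div_le_iff₀ (by norm_num : (0:ℚ) < 4)]
  push_cast
  have : ((p : ℚ) + 1) ≤ 4 * (psiSet p Γ : ℚ) := by exact_mod_cast hfin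
  linarith
end
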